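/- arXiv:2601.18055 — 4 statements merged into one kernel-verified Lean document; each statement's English description precedes it below -/
import Mathlib

section
/- Let A be self-adjoint and B bounded self-adjoint on a Hilbert space H. For z ∈ ℂ \ ℝ, if ψ lies in the range of B, then ⟨ψ, (A + βB - z)⁻¹φ⟩ → 0 as β → ∞, for every φ ∈ H. (Weak convergence of the resolvent to zero on the range of B.) -/
/-!
STATEMENT 1: With `A` self-adjoint (densely defined), `B` bounded self-adjoint and
`z` nonreal, if `ψ ∈ Ran B` then `⟨ψ, (A + βB - z)⁻¹ φ⟩ → 0` as `β → ∞`, for all `φ`.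
-/

open scoped ComplexInnerProductSpace

noncomputable def opFam {H : Type*} [NormedAddCommGroup H] [InnerProductSpace ℂ H]
    (A : H →ₗ.[ℂ] H) (B : H →L[ℂ] H) (β : ℝ) (z : ℂ) : H →ₗ.[ℂ] H where
  domain := A.domain
  toFun := A.toFun + (β : ℂ) • ((B : H →ₗ[ℂ] H).comp A.domain.subtype)
      - z • A.domain.subtype

def IsBddInverseOn {H : Type*} [NormedAddCommGroup H] [InnerProductSpace ℂ H]
    (T : H →ₗ.[ℂ] H) (R : H →L[ℂ] H) : Prop :=
  (∀ x : H, ∃ hx : R x ∈ T.domain, T ⟨R x, hx⟩ = x) ∧ ∀ y : T.domain, R (T y) = y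

theorem opFam_apply {H : Type*} [NormedAddCommGroup H] [InnerProductSpace ℂ H]
    (A : H →ₗ.[ℂ] H) (B : H →L[ℂ] H) (β : ℝ) (z : ℂ) (y : A.domain) :
    opFam A B β z y = A y + (β : ℂ) • B (y : H) - z • (y : H) := rfl

theorem weak_resolvent_convergence_on_range {H : Type*} [NormedAddCommGroup H]
    [InnerProductSpace ℂ H] [CompleteSpace H]
    (A : H →ₗ.[ℂ] H) (hA : IsSelfAdjoint A) (hdense : Dense (A.domain : Set H))
    (B : H →L[ℂ] H) (hB : IsSelfAdjoint B) (z : ℂ) (hz : z.im ≠ 0)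
    (R : ℝ → (H →L[ℂ] H)) (hR : ∀ β : ℝ, IsBddInverseOn (opFam A B β z) (R β))
    (ψ : H) (hψ : ψ ∈ Set.range B) (φ : H) :
    Filter.Tendsto (fun β : ℝ => ⟪ψ, R β φ⟫) Filter.atTop (nhds 0) := by
  obtain ⟨χ, rfl⟩ := hψ
  -- symmetry of A
  have hsym : A.IsFormalAdjoint A := by
    rw [LinearPMap.isSelfAdjoint_def] at hA
    have h := A.adjoint_isFormalAdjoint hdense
    rwa [hA] at h
  have hBsym : (B : H →ₗ[ℂ] H).IsSymmetric :=
    ContinuousLinearMap.isSelfAdjoint_iff_isSymmetric.mp hB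
  set M : ℝ := ‖φ‖ / |z.im| with hM
  have hM0 : 0 ≤ M := div_nonneg (norm_nonneg _) (abs_nonneg _)
  -- uniform bound on the resolvent applied to φ
  have hbound : ∀ β : ℝ, ‖R β φ‖ ≤ M := by
    intro β
    obtain ⟨hx, heq⟩ := (hR β).1 φ
    set x : H := R β φ
    set x' : A.domain := ⟨x, hx⟩
    change A x' + (β : ℂ) • B (x' : H) - z • (x' : H) = φ at heq
    have hinner : ⟪x, φ⟫ = ⟪x, A x'⟫ + (β : ℂ) * ⟪x, B x⟫ - z * ⟪x, x⟫ := by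
      conv_lhs => rw [← heq]
      rw [inner_sub_right, inner_add_right, inner_smul_right, inner_smul_right]
    have hAreal : (⟪x, A x'⟫).im = 0 := by
      have h1 : ⟪A x', (x' : H)⟫ = ⟪(x' : H), A x'⟫ := hsym x' x'
      have h2 : (starRingEnd ℂ) ⟪x, A x'⟫ = ⟪x, A x'⟫ := by
        rw [inner_conj_symm]; exact h1
      have := Complex.conj_eq_iff_im.mp h2
      simpa using this
    have hBreal : (⟪x, B x⟫).im = 0 := by
      have h2 : (starRingEnd ℂ) ⟪x, B x⟫ = ⟪x, B x⟫ := by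
        rw [inner_conj_symm]; exact hBsym x x
      simpa using Complex.conj_eq_iff_im.mp h2
    have him : (⟪x, φ⟫).im = - z.im * ‖x‖ ^ 2 := by
      have hxx : ⟪x, x⟫ = ((‖x‖ ^ 2 : ℝ) : ℂ) := by
        exact_mod_cast inner_self_eq_norm_sq_to_K (𝕜 := ℂ) x
      rw [hinner, hxx]
      simp [Complex.sub_im, Complex.add_im, Complex.mul_im, hAreal, hBreal,
        Complex.ofReal_re, Complex.ofReal_im]
      rw [← Complex.ofReal_pow, Complex.ofReal_re, Complex.ofReal_im]
      ring
    have hle : |z.im| * ‖x‖ ^ 2 ≤ ‖x‖ * ‖φ‖ := by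
      have h1 : |(⟪x, φ⟫).im| ≤ ‖⟪x, φ⟫‖ := Complex.abs_im_le_norm _
      have h2 : ‖⟪x, φ⟫‖ ≤ ‖x‖ * ‖φ‖ := norm_inner_le_norm x φ
      have h3 : |(⟪x, φ⟫).im| = |z.im| * ‖x‖ ^ 2 := by
        rw [him, abs_mul, abs_neg]
        congr 1
        exact abs_of_nonneg (by positivity)
      linarith
    rcases eq_or_lt_of_le (norm_nonneg x) with h0 | h0
    · rw [← h0]; exact hM0
    · rw [hM, le_div_iff₀ (abs_pos.mpr hz)]
      nlinarith
  -- convergence for χ' in the domain of A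
  have hker : ∀ χ' : A.domain, Filter.Tendsto (fun β : ℝ => ⟪B (χ' : H), R β φ⟫)
      Filter.atTop (nhds 0) := by
    intro χ'
    set C : ℝ := ‖(χ' : H)‖ * ‖φ‖ + (‖A χ'‖ + ‖z‖ * ‖(χ' : H)‖) * M with hC
    have hC0 : 0 ≤ C := by positivity
    have key : ∀ β : ℝ, β ≠ 0 → ‖⟪B (χ' : H), R β φ⟫‖ ≤ C / |β| := by
      intro β hβ
      obtain ⟨hx, heq⟩ := (hR β).1 φ
      set x : H := R β φ
      set x' : A.domain := ⟨x, hx⟩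
      change A x' + (β : ℂ) • B (x' : H) - z • (x' : H) = φ at heq
      have hBx : (β : ℂ) • B x = φ - A x' + z • x := by
        rw [← heq]; abel
      have h1 : (β : ℂ) * ⟪B (χ' : H), x⟫ = ⟪(χ' : H), φ⟫ - ⟪A χ', x⟫ + z * ⟪(χ' : H), x⟫ := by
        have hs : ⟪B (χ' : H), x⟫ = ⟪(χ' : H), B x⟫ := hBsym (χ' : H) x
        have hA' : ⟪(χ' : H), A x'⟫ = ⟪A χ', (x' : H)⟫ := (hsym χ' x').symm
        calc (β : ℂ) * ⟪B (χ' : H), x⟫ = ⟪(χ' : H), (β : ℂ) • B x⟫ := by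
              rw [inner_smul_right, hs]
          _ = ⟪(χ' : H), φ - A x' + z • x⟫ := by rw [hBx]
          _ = ⟪(χ' : H), φ⟫ - ⟪A χ', x⟫ + z * ⟪(χ' : H), x⟫ := by
              rw [inner_add_right, inner_sub_right, inner_smul_right, hA']
      have hnorm : |β| * ‖⟪B (χ' : H), x⟫‖ ≤ C := by
        have := congrArg norm h1
        rw [norm_mul, Complex.norm_real, Real.norm_eq_abs] at this
        rw [this]
        have e1 : ‖⟪(χ' : H), φ⟫‖ ≤ ‖(χ' : H)‖ * ‖φ‖ := norm_inner_le_norm _ _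
        have e2 : ‖⟪A χ', x⟫‖ ≤ ‖A χ'‖ * M :=
          le_trans (norm_inner_le_norm _ _)
            (mul_le_mul_of_nonneg_left (hbound β) (norm_nonneg _))
        have e3 : ‖z * ⟪(χ' : H), x⟫‖ ≤ ‖z‖ * (‖(χ' : H)‖ * M) := by
          rw [norm_mul]
          exact mul_le_mul_of_nonneg_left
            (le_trans (norm_inner_le_norm _ _)
              (mul_le_mul_of_nonneg_left (hbound β) (norm_nonneg _))) (norm_nonneg _)
        calc ‖⟪(χ' : H), φ⟫ - ⟪A χ', x⟫ + z * ⟪(χ' : H), x⟫‖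
            ≤ ‖⟪(χ' : H), φ⟫ - ⟪A χ', x⟫‖ + ‖z * ⟪(χ' : H), x⟫‖ := norm_add_le _ _
          _ ≤ ‖⟪(χ' : H), φ⟫‖ + ‖⟪A χ', x⟫‖ + ‖z * ⟪(χ' : H), x⟫‖ := by
              linarith [norm_sub_le ⟪(χ' : H), φ⟫ ⟪A χ', x⟫]
          _ ≤ C := by rw [hC]; nlinarith
      rw [le_div_iff₀ (abs_pos.mpr hβ), mul_comm]
      exact hnorm
    have htend : Filter.Tendsto (fun β : ℝ => C / |β|) Filter.atTop (nhds 0) := by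
      have : Filter.Tendsto (fun β : ℝ => |β|) Filter.atTop Filter.atTop :=
        Filter.tendsto_abs_atTop_atTop
      exact Filter.Tendsto.div_atTop tendsto_const_nhds this
    rw [tendsto_zero_iff_norm_tendsto_zero]
    apply squeeze_zero' ?_ ?_ htend
    · exact Filter.Eventually.of_forall fun β => norm_nonneg _
    · filter_upwards [Filter.eventually_gt_atTop 0] with β hβ
      exact key β (ne_of_gt hβ)
  -- approximation argument
  rw [NormedAddCommGroup.tendsto_nhds_zero]
  intro ε hε
  set δ : ℝ := (ε / 2) / (‖B‖ * M + 1) with hδ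
  have hδpos : 0 < δ := by positivity
  obtain ⟨χ', hχ'mem, hχ'close⟩ := hdense.exists_dist_lt χ hδpos
  have hclose : ‖χ - χ'‖ < δ := by rwa [← dist_eq_norm]
  have h1 : ∀ β : ℝ, ‖⟪B χ, R β φ⟫ - ⟪B χ', R β φ⟫‖ ≤ ε / 2 := by
    intro β
    have : ⟪B χ, R β φ⟫ - ⟪B χ', R β φ⟫ = ⟪B (χ - χ'), R β φ⟫ := by
      rw [map_sub, inner_sub_left]
    rw [this]
    calc ‖⟪B (χ - χ'), R β φ⟫‖ ≤ ‖B (χ - χ')‖ * ‖R β φ‖ := norm_inner_le_norm _ _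
      _ ≤ (‖B‖ * ‖χ - χ'‖) * M := by
          apply mul_le_mul (B.le_opNorm _) (hbound β) (norm_nonneg _) (by positivity)
      _ ≤ (‖B‖ * δ) * M := by
          have h' : ‖χ - χ'‖ ≤ δ := hclose.le
          gcongr
      _ ≤ (‖B‖ * M + 1) * δ := by nlinarith [norm_nonneg B, hδpos.le]
      _ = ε / 2 := by
          rw [hδ]; field_simp
  have h2 := (NormedAddCommGroup.tendsto_nhds_zero.mp (hker ⟨χ', hχ'mem⟩)) (ε / 2)
    (by positivity)
  filter_upwards [h2] with β hβ2
  calc ‖⟪B χ, R β φ⟫‖ ≤ ‖⟪B χ, R β φ⟫ - ⟪B (⟨χ', hχ'mem⟩ : A.domain), R β φ⟫‖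
        + ‖⟪B ((⟨χ', hχ'mem⟩ : A.domain) : H), R β φ⟫‖ := by
          simpa using norm_add_le (⟪B χ, R β φ⟫ - ⟪B χ', R β φ⟫) ⟪B χ', R β φ⟫
    _ ≤ ε / 2 + ‖⟪B ((⟨χ', hχ'mem⟩ : A.domain) : H), R β φ⟫‖ := by
          exact add_le_add_left (h1 β) _
    _ < ε / 2 + ε / 2 := by exact add_lt_add_right hβ2 _
    _ = ε := by ring
end

section
/- Let B be a bounded operator on a Hilbert space with 0 an isolated point of σ(B), whose Riesz projection P at 0 is an orthogonal projection (P = P*). Then there exists C > 0 such that |⟨η, Bη⟩| ≤ C ‖Bη‖² for all η ∈ H. -/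
/-!
STATEMENT 6: Let `B` be bounded with `0` isolated in `σ(B)` whose Riesz projection `P`
at `0` is an orthogonal projection (`P = P*`).  Then there is `C > 0` with
`|⟨η, Bη⟩| ≤ C ‖Bη‖²` for all `η`.
-/

open scoped ComplexInnerProductSpace

theorem inner_le_of_orthogonal_riesz_projection {H : Type*} [NormedAddCommGroup H]
    [InnerProductSpace ℂ H] [CompleteSpace H]
    (B : H →L[ℂ] H)
    (hspec : (0 : ℂ) ∈ spectrum ℂ B)
    -- `0` is isolated in `σ(B)`:
    (hiso : ∃ ε > (0 : ℝ), ∀ w ∈ spectrum ℂ B, w ≠ 0 → ε ≤ ‖w‖)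
    -- `P` is the Riesz projection at `0`: idempotent, commuting with `B`,
    -- with quasinilpotent part `BP = PB = 0` and `QBQ` invertible on `QH`
    -- (expressed as invertibility of `B + P`):
    (P : H →L[ℂ] H) (hidem : P ∘L P = P)
    (hcomm : P ∘L B = B ∘L P)
    (hquasi : B ∘L P = 0)
    (hQinv : IsUnit (B + P))
    -- `P` is an orthogonal projection:
    (hPsa : IsSelfAdjoint P) :
    ∃ C > (0 : ℝ), ∀ η : H, ‖⟪η, B η⟫‖ ≤ C * ‖B η‖ ^ 2 := by
  obtain ⟨u, hu⟩ := hQinv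
  set T : H →L[ℂ] H := (↑u⁻¹ : H →L[ℂ] H) with hT
  have hTinv : T ∘L (B + P) = 1 := by
    have := u.inv_mul
    rw [hu] at this
    exact this
  have hPB : P ∘L B = 0 := by rw [hcomm, hquasi]
  refine ⟨‖T‖ + 1, by positivity, fun η => ?_⟩
  -- Q η = T (B η)
  have hQeq : η - P η = T (B η) := by
    have h1 : (B + P) (η - P η) = B η := by
      have h2 : B (P η) = 0 := by
        have := congrFun (congrArg DFunLike.coe hquasi) η
        simpa using this
      have h3 : P (P η) = P η := by
        have := congrFun (congrArg DFunLike.coe hidem) η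
        simpa using this
      simp [ContinuousLinearMap.add_apply, map_sub, h2, h3]
    calc η - P η = (T ∘L (B + P)) (η - P η) := by rw [hTinv]; simp
    _ = T (B η) := by simp only [ContinuousLinearMap.comp_apply, h1]
  -- ⟪η, B η⟫ = ⟪η - P η, B η⟫
  have hinner : ⟪η, B η⟫ = ⟪η - P η, B η⟫ := by
    have hP0 : ⟪P η, B η⟫ = 0 := by
      have hadj : ContinuousLinearMap.adjoint P = P := hPsa.adjoint_eq
      have : ⟪P η, B η⟫ = ⟪η, P (B η)⟫ := by
        conv_lhs => rw [← hadj]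
        exact ContinuousLinearMap.adjoint_inner_left P (B η) η
      rw [this]
      have : P (B η) = 0 := by
        have := congrFun (congrArg DFunLike.coe hPB) η
        simpa using this
      simp [this]
    rw [inner_sub_left, hP0, sub_zero]
  calc ‖⟪η, B η⟫‖ = ‖⟪η - P η, B η⟫‖ := by rw [hinner]
  _ ≤ ‖η - P η‖ * ‖B η‖ := norm_inner_le_norm _ _
  _ = ‖T (B η)‖ * ‖B η‖ := by rw [hQeq]
  _ ≤ (‖T‖ * ‖B η‖) * ‖B η‖ := by
      gcongr
      exact T.le_opNorm _
  _ ≤ (‖T‖ + 1) * ‖B η‖ ^ 2 := by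
      rw [sq]
      have hn : (0:ℝ) ≤ ‖B η‖ := norm_nonneg _
      nlinarith [norm_nonneg (B η), norm_nonneg T]
end

section
/- Let T_z (for z in an open set) be a pseudo-resolvent on a Hilbert space (i.e., T_z - T_y = (z-y)T_z T_y) arising as the norm limit of resolvents (A + βB - z)⁻¹, and suppose PA (P a bounded projection, with closed compression) is closed. If T_z Pψ = 0 for some ψ, then Pψ = 0; i.e., T_z restricted to PH is injective, where P is the Riesz projection of B at 0 and the limit satisfies QT_z = T_zQ = 0 appropriately. -/
theorem limit_pseudoresolvent_injective_on_PH {H : Type*} [NormedAddCommGroup H]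
    [InnerProductSpace ℂ H] [CompleteSpace H]
    (A : H →ₗ.[ℂ] H) (hAclosed : A.IsClosed) (hAdense : Dense (A.domain : Set H))
    (B : H →L[ℂ] H)
    -- `P` is the Riesz projection of `B` at `0`, with vanishing quasinilpotent part:
    (P : H →L[ℂ] H) (hidem : P ∘L P = P) (hPB : P ∘L B = 0)
    -- the compression `PA : D(A) → PH` is closed (stated sequentially along `β → ∞`):
    (hPAclosed : ∀ (f : ℝ → A.domain) (x y : H),
      Filter.Tendsto (fun β => ((f β : H))) Filter.atTop (nhds x) →
      Filter.Tendsto (fun β => P (A (f β))) Filter.atTop (nhds y) →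
      ∃ hx : x ∈ A.domain, P (A ⟨x, hx⟩) = y)
    (z : ℂ)
    -- the resolvents, existing for all large `β`, converging in norm to `T`:
    (R : ℝ → (H →L[ℂ] H))
    (hR : ∀ᶠ β : ℝ in Filter.atTop, IsBddInverseOn (opFam A B β z) (R β))
    (T : H →L[ℂ] H)
    (hT : Filter.Tendsto (fun β : ℝ => ‖R β - T‖) Filter.atTop (nhds 0))
    (ψ : H) (hT0 : T (P ψ) = 0) :
    P ψ = 0 := by
  obtain ⟨β₀, hβ₀⟩ := Filter.eventually_atTop.mp hR
  -- choose membership proofs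
  have hmem : ∀ β ≥ β₀, R β (P ψ) ∈ A.domain := fun β hβ => (hβ₀ β hβ).1 (P ψ) |>.choose
  classical
  set f : ℝ → A.domain := fun β =>
    if h : β ≥ β₀ then ⟨R β (P ψ), hmem β h⟩ else 0 with hf
  -- η_β → 0
  have hcoe : Filter.Tendsto (fun β => ((f β : H))) Filter.atTop (nhds 0) := by
    have hb : ∀ᶠ β : ℝ in Filter.atTop, ‖(f β : H)‖ ≤ ‖R β - T‖ * ‖P ψ‖ := by
      filter_upwards [Filter.eventually_ge_atTop β₀] with β hβ
      simp only [hf, dif_pos hβ]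
      have : R β (P ψ) = (R β - T) (P ψ) := by simp [hT0]
      rw [this]
      exact (R β - T).le_opNorm _
    have hlim : Filter.Tendsto (fun β => ‖R β - T‖ * ‖P ψ‖) Filter.atTop (nhds 0) := by
      simpa using hT.mul_const ‖P ψ‖
    rw [tendsto_zero_iff_norm_tendsto_zero]
    exact squeeze_zero' (Filter.Eventually.of_forall fun β => norm_nonneg _) hb hlim
  -- identity: P (A (f β)) = Pψ + z • P (f β) for β ≥ β₀
  have hid : ∀ β ≥ β₀, P (A (f β)) = P ψ + z • P ((f β : H)) := by
    intro β hβ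
    have h1 := (hβ₀ β hβ).1 (P ψ)
    have h2 : (opFam A B β z) ⟨R β (P ψ), hmem β hβ⟩ = P ψ := h1.choose_spec
    have h3 : A ⟨R β (P ψ), hmem β hβ⟩ + (β : ℂ) • B (R β (P ψ))
        - z • (R β (P ψ)) = P ψ := by
      simpa [opFam, LinearPMap.mk_apply, LinearMap.add_apply, LinearMap.sub_apply,
        LinearMap.smul_apply] using h2
    have hfb : f β = ⟨R β (P ψ), hmem β hβ⟩ := by simp [hf, dif_pos hβ]
    rw [hfb]
    have := congrArg P h3
    have hPB' : P (B (R β (P ψ))) = 0 := by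
      have := congrFun (congrArg DFunLike.coe hPB) (R β (P ψ))
      simpa using this
    have hPP : P (P ψ) = P ψ := by
      have := congrFun (congrArg DFunLike.coe hidem) ψ
      simpa using this
    simp only [map_add, map_sub, map_smul, hPB', smul_zero, add_zero, hPP] at this
    have : P (A ⟨R β (P ψ), hmem β hβ⟩) - z • P (R β (P ψ)) = P ψ := this
    have := sub_eq_iff_eq_add.mp this
    rw [this]
  -- P (A (f β)) → P ψ
  have hPA : Filter.Tendsto (fun β => P (A (f β))) Filter.atTop (nhds (P ψ)) := by
    have h1 : Filter.Tendsto (fun β => P ψ + z • P ((f β : H))) Filter.atTop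
        (nhds (P ψ + z • P (0 : H))) := by
      exact Filter.Tendsto.const_add _ ((P.continuous.tendsto 0).comp hcoe |>.const_smul z)
    simp only [map_zero, smul_zero, add_zero] at h1
    refine h1.congr' ?_
    filter_upwards [Filter.eventually_ge_atTop β₀] with β hβ
    exact (hid β hβ).symm
  obtain ⟨h0, hP0⟩ := hPAclosed f 0 (P ψ) hcoe hPA
  have : (⟨0, h0⟩ : A.domain) = 0 := rfl
  rw [this, A.map_zero, P.map_zero] at hP0
  exact hP0.symm
end

section
/- Let B ∈ B(H) with 0 isolated in σ(B), vanishing quasinilpotent part, Riesz projection P and Q = I - P. Let A be closed with P D(A) ⊆ D(A), P D(A) dense in PH, QA and AQ extending to bounded operators on H, and z ∈ ρ(PAP) (PAP viewed as a closed operator on PD(A) ⊆ PH). Then there exists β₀ such that for all β ≥ β₀, A + βB - z is boundedly invertible and ‖(A + βB - z)⁻¹ - P(PAP - z)⁻¹P‖ ≤ C/β for some constant C independent of β. -/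
/-- Auxiliary: bound on the inverse of a small perturbation of `1`. -/
lemma aux_inv_norm_le_two {R : Type*} [NormedRing R] (h1 : ‖(1:R)‖ ≤ 1) (u : Rˣ) (t : R)
    (hu : (u:R) = 1 - t) (ht : ‖t‖ ≤ 1/2) : ‖((u⁻¹:Rˣ):R)‖ ≤ 2 := by
  have h2 : (↑u⁻¹ : R) - t * ↑u⁻¹ = 1 := by
    have := u.mul_inv
    rw [hu, sub_mul, one_mul] at this
    exact this
  have h3 : (↑u⁻¹ : R) = 1 + t * ↑u⁻¹ := by
    rw [← h2]; abel
  have h5 := norm_mul_le t ((↑u⁻¹:R))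
  have h6 := mul_le_mul_of_nonneg_right ht (norm_nonneg ((↑u⁻¹:R)))
  have h4 : ‖(↑u⁻¹ : R)‖ ≤ 1 + 1/2 * ‖(↑u⁻¹ : R)‖ := by
    calc ‖(↑u⁻¹ : R)‖ = ‖1 + t * ↑u⁻¹‖ := by rw [← h3]
    _ ≤ ‖(1:R)‖ + ‖t * ↑u⁻¹‖ := norm_add_le _ _
    _ ≤ 1 + 1/2 * ‖(↑u⁻¹:R)‖ := by linarith
  linarith

lemma aux_norm_mul4 {R : Type*} [NormedRing R] (a b c d : R) :
    ‖a*b*c*d‖ ≤ ‖a‖*‖b‖*‖c‖*‖d‖ := by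
  calc ‖a*b*c*d‖ ≤ ‖a*b*c‖*‖d‖ := norm_mul_le _ _
  _ ≤ (‖a*b‖*‖c‖)*‖d‖ := by
      exact mul_le_mul_of_nonneg_right (norm_mul_le _ _) (norm_nonneg _)
  _ ≤ ((‖a‖*‖b‖)*‖c‖)*‖d‖ := by
      exact mul_le_mul_of_nonneg_right
        (mul_le_mul_of_nonneg_right (norm_mul_le _ _) (norm_nonneg _)) (norm_nonneg _)

set_option maxHeartbeats 3000000 in
theorem norm_resolvent_convergence_bounded_B {H : Type*} [NormedAddCommGroup H]
    [InnerProductSpace ℂ H] [CompleteSpace H]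
    (A : H →ₗ.[ℂ] H) (hAclosed : A.IsClosed) (hAdense : Dense (A.domain : Set H))
    (B : H →L[ℂ] H)
    -- `P` is the Riesz projection of `B` at the isolated point `0 ∈ σ(B)`,
    -- with vanishing quasinilpotent part and `QBQ` invertible on `QH`:
    (hspec : (0 : ℂ) ∈ spectrum ℂ B)
    (hiso : ∃ ε > (0 : ℝ), ∀ w ∈ spectrum ℂ B, w ≠ 0 → ε ≤ ‖w‖)
    (P : H →L[ℂ] H) (hidem : P ∘L P = P)
    (hPB : P ∘L B = 0) (hBP : B ∘L P = 0)
    (hQinv : IsUnit (B + P))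
    -- `P` preserves the domain of `A`, and `P D(A)` is dense in `PH`:
    (hPdom : ∀ x ∈ A.domain, P x ∈ A.domain)
    (hPdense : Set.range P ⊆ closure (P '' (A.domain : Set H)))
    -- `QA` and `AQ` extend to bounded operators on `H`:
    (QA : H →L[ℂ] H) (hQA : ∀ ψ : A.domain, QA (ψ : H) = A ψ - P (A ψ))
    (AQ : H →L[ℂ] H) (hAQ : ∀ ψ : A.domain,
      AQ (ψ : H) = A ⟨(ψ : H) - P (ψ : H), A.domain.sub_mem ψ.2 (hPdom _ ψ.2)⟩)
    -- `z ∈ ρ(PAP)`: `Rz` is a bounded two-sided inverse of `PAP - z` on `PH`: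
    (z : ℂ) (Rz : H →L[ℂ] H)
    (hRzP : ∀ x : H, P (Rz x) = Rz x ∧ Rz (P x) = Rz x)
    (hRzdom : ∀ x : H, Rz x ∈ A.domain)
    (hRz₁ : ∀ x : H, P (A ⟨P (Rz x), hPdom _ (hRzdom x)⟩) - z • Rz x = P x)
    (hRz₂ : ∀ ψ : A.domain,
      Rz (P (A ⟨P (ψ : H), hPdom _ ψ.2⟩) - z • P (ψ : H)) = P (ψ : H)) :
    ∃ C ≥ (0 : ℝ), ∃ β₀ : ℝ, ∀ β : ℝ, β₀ ≤ β →
      ∃ R : H →L[ℂ] H, IsBddInverseOn (opFam A B β z) R ∧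
        ‖R - P ∘L Rz ∘L P‖ ≤ C / β := by
  classical
  -- pointwise application helpers (all `rfl`)
  have happly : ∀ (f g : H →L[ℂ] H) (y : H), (f * g) y = f (g y) := fun _ _ _ => rfl
  have haddapply : ∀ (f g : H →L[ℂ] H) (y : H), (f + g) y = f y + g y := fun _ _ _ => rfl
  have hsubapply : ∀ (f g : H →L[ℂ] H) (y : H), (f - g) y = f y - g y := fun _ _ _ => rfl
  have hsmulapply : ∀ (a : ℂ) (f : H →L[ℂ] H) (y : H), (a • f) y = a • (f y) := fun _ _ _ => rfl
  have honeapply : ∀ (y : H), (1 : H →L[ℂ] H) y = y := fun _ => rfl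
  have hzeroapply : ∀ (y : H), (0 : H →L[ℂ] H) y = 0 := fun _ => rfl
  -- congruence for `A`
  have hApp : ∀ {x y : H} (hx : x ∈ A.domain) (hy : y ∈ A.domain),
      x = y → A ⟨x, hx⟩ = A ⟨y, hy⟩ := by
    intro x y hx hy h; subst h; rfl
  -- dense extension
  have dense_ext : ∀ (f g : H →L[ℂ] H), (∀ ψ : A.domain, f ψ = g ψ) → f = g := by
    intro f g h
    ext x
    have : (⇑f) = ⇑g := Continuous.ext_on hAdense f.continuous g.continuous
      (fun y hy => h ⟨y, hy⟩)
    exact congrFun this x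
  -- basic algebra of `P`, `Q₀`, `B`, `U`
  obtain ⟨Q₀, hQ₀⟩ : ∃ Q₀ : H →L[ℂ] H, Q₀ = 1 - P := ⟨_, rfl⟩
  obtain ⟨U, hU⟩ : ∃ U : H →L[ℂ] H, U = ((hQinv.unit⁻¹ : (H →L[ℂ] H)ˣ) : H →L[ℂ] H) :=
    ⟨_, rfl⟩
  have hPP : P * P = P := hidem
  have hPBm : P * B = 0 := hPB
  have hBPm : B * P = 0 := hBP
  have hQ₀app : ∀ y : H, Q₀ y = y - P y := fun y => by rw [hQ₀]; rfl
  have hQP : Q₀ * P = 0 := by rw [hQ₀, sub_mul, one_mul, hPP, sub_self]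
  have hPQ : P * Q₀ = 0 := by rw [hQ₀, mul_sub, mul_one, hPP, sub_self]
  have hQQ : Q₀ * Q₀ = Q₀ := by
    rw [hQ₀, mul_sub, mul_one, sub_mul, one_mul, hPP]; abel
  have hBQ : B * Q₀ = B := by rw [hQ₀, mul_sub, mul_one, hBPm, sub_zero]
  have hQB : Q₀ * B = B := by rw [hQ₀, sub_mul, one_mul, hPBm, sub_zero]
  have hUBP : (B + P) * U = 1 := by
    have h := hQinv.unit.mul_inv
    rw [hQinv.unit_spec] at h
    rw [hU]; exact h
  have hUBP' : U * (B + P) = 1 := by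
    have h := hQinv.unit.inv_mul
    rw [hQinv.unit_spec] at h
    rw [hU]; exact h
  have hPU : P * U = U * P := by
    have hc : Commute P ((hQinv.unit : (H →L[ℂ] H)ˣ) : H →L[ℂ] H) := by
      rw [hQinv.unit_spec]
      show P * (B + P) = (B + P) * P
      rw [mul_add, add_mul, hPBm, hBPm, hPP]
    rw [hU]
    exact hc.units_inv_right
  have hQU : Q₀ * U = U * Q₀ := by
    rw [hQ₀, sub_mul, mul_sub, one_mul, mul_one, hPU]
  have hPid : ∀ y : H, P (P y) = P y := fun y => by
    rw [← happly, hPP]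
  -- density identities for `AQ` and `QA`
  have hAQP : AQ * P = 0 := by
    apply dense_ext
    intro ψ
    rw [happly, hzeroapply]
    have h1 := hAQ ⟨P ψ, hPdom _ ψ.2⟩
    have h2 : A ⟨(P (ψ:H)) - P (P (ψ:H)),
        A.domain.sub_mem (hPdom _ ψ.2) (hPdom _ (hPdom _ ψ.2))⟩ = A 0 := by
      refine (hApp _ _ ?_).trans (by rfl)
      rw [hPid]; exact sub_self _
    rw [h1]
    rw [h2, A.map_zero]
  have hAQQ : AQ * Q₀ = AQ := by
    apply dense_ext
    intro ψ
    rw [happly]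
    have hmem : (ψ:H) - P (ψ:H) ∈ A.domain := A.domain.sub_mem ψ.2 (hPdom _ ψ.2)
    have h1 := hAQ ⟨(ψ:H) - P (ψ:H), hmem⟩
    have h2 := hAQ ψ
    rw [hQ₀app, h1, h2]
    apply hApp
    rw [map_sub, hPid]
    abel
  have hPQA : P * QA = 0 := by
    apply dense_ext
    intro ψ
    rw [happly, hzeroapply, hQA ψ, map_sub, hPid, sub_self]
  have hQQA : Q₀ * QA = QA := by rw [hQ₀, sub_mul, one_mul, hPQA, sub_zero]
  -- closedness: `Q₀` maps into the domain of `A`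
  have hQdom : ∀ y : H, ∃ h : y - P y ∈ A.domain, A ⟨y - P y, h⟩ = AQ y := by
    intro y
    obtain ⟨s, hs, hlim⟩ := mem_closure_iff_seq_limit.mp (hAdense y)
    have hmem : ∀ n, ((s n - P (s n), AQ (s n)) : H × H) ∈ A.graph := by
      intro n
      have h1 : s n - P (s n) ∈ A.domain := A.domain.sub_mem (hs n) (hPdom _ (hs n))
      have h2 := A.mem_graph ⟨s n - P (s n), h1⟩
      have h3 : AQ (s n) = A ⟨s n - P (s n), h1⟩ := hAQ ⟨s n, hs n⟩
      rw [h3]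
      exact h2
    have htend : Filter.Tendsto (fun n => ((s n - P (s n), AQ (s n)) : H × H))
        Filter.atTop (nhds (y - P y, AQ y)) := by
      refine Filter.Tendsto.prodMk_nhds ?_ ?_
      · exact hlim.sub ((P.continuous.tendsto y).comp hlim)
      · exact (AQ.continuous.tendsto y).comp hlim
    have hg : ((y - P y, AQ y) : H × H) ∈ A.graph :=
      hAclosed.mem_of_tendsto htend (Filter.Eventually.of_forall hmem)
    rw [LinearPMap.mem_graph_iff] at hg
    obtain ⟨yd, h1, h2⟩ := hg
    have hm : y - P y ∈ A.domain := by
      have := yd.2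
      rw [show ((yd : H)) = y - P y from h1] at this
      exact this
    refine ⟨hm, ?_⟩
    have he : (⟨y - P y, hm⟩ : A.domain) = yd := Subtype.ext h1.symm
    rw [he]; exact h2
  -- the bounded blocks
  obtain ⟨bb, hbb⟩ : ∃ bb : H →L[ℂ] H, bb = P * AQ := ⟨_, rfl⟩
  obtain ⟨cc, hcc⟩ : ∃ cc : H →L[ℂ] H, cc = QA * P := ⟨_, rfl⟩
  obtain ⟨K, hK⟩ : ∃ K : H →L[ℂ] H, K = Q₀ * AQ - z • Q₀ := ⟨_, rfl⟩
  obtain ⟨J, hJ⟩ : ∃ J : H →L[ℂ] H, J = Q₀ * U := ⟨_, rfl⟩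
  have hKQ : K * Q₀ = K := by
    rw [hK, sub_mul, smul_mul_assoc, hQQ, mul_assoc, hAQQ]
  have hQK : Q₀ * K = K := by
    rw [hK, mul_sub, mul_smul_comm, ← mul_assoc, hQQ]
  have hKP : K * P = 0 := by
    rw [hK, sub_mul, mul_assoc, hAQP, mul_zero, smul_mul_assoc, hQP, smul_zero, sub_zero]
  have hPbb : P * bb = bb := by rw [hbb, ← mul_assoc, hPP]
  have hQbb : Q₀ * bb = 0 := by rw [hbb, ← mul_assoc, hQP, zero_mul]
  have hbbP : bb * P = 0 := by rw [hbb, mul_assoc, hAQP, mul_zero]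
  have hccP : cc * P = cc := by rw [hcc, mul_assoc, hPP]
  have hQcc : Q₀ * cc = cc := by rw [hcc, ← mul_assoc, hQQA]
  have hPRz : P * Rz = Rz := by
    apply ContinuousLinearMap.ext
    intro x; rw [happly]; exact (hRzP x).1
  have hRzPm : Rz * P = Rz := by
    apply ContinuousLinearMap.ext
    intro x; rw [happly]; exact (hRzP x).2
  have hone : ‖(1 : H →L[ℂ] H)‖ ≤ 1 := by
    rw [ContinuousLinearMap.one_def]; exact ContinuousLinearMap.norm_id_le
  -- the constants
  refine ⟨2*‖J‖*(2*‖Rz‖*‖Rz‖*‖bb‖*‖cc‖ + 2*‖Rz‖*‖bb‖ + (1 + 2*‖Rz‖*‖cc‖*(1+‖bb‖))),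
    by positivity,
    max 1 (max (2*‖J*K‖+1) (max (2*‖J‖+1) (4*(‖Rz‖*‖bb‖*‖cc‖*‖J‖)+1))), ?_⟩
  intro β hβ
  have hβ1 : (1:ℝ) ≤ β := le_trans (le_max_left _ _) hβ
  have hβJK : 2*‖J*K‖+1 ≤ β := le_trans (le_trans (le_max_left _ _) (le_max_right _ _)) hβ
  have hβJ : 2*‖J‖+1 ≤ β :=
    le_trans (le_trans (le_trans (le_max_left _ _) (le_max_right _ _)) (le_max_right _ _)) hβ
  have hβbc : 4*(‖Rz‖*‖bb‖*‖cc‖*‖J‖)+1 ≤ β :=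
    le_trans (le_trans (le_trans (le_max_right _ _) (le_max_right _ _)) (le_max_right _ _)) hβ
  have hβ0 : (0:ℝ) < β := lt_of_lt_of_le one_pos hβ1
  have hβc : ((β:ℝ):ℂ) ≠ 0 := by
    simp only [ne_eq, Complex.ofReal_eq_zero]
    exact hβ0.ne'
  have hnβ : ‖(((β:ℝ):ℂ)⁻¹)‖ = β⁻¹ := by
    rw [norm_inv, Complex.norm_real, Real.norm_eq_abs, abs_of_pos hβ0]
  have hJKn : (0:ℝ) ≤ ‖J*K‖ := norm_nonneg _
  -- the invertible `Q`-corner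
  obtain ⟨Gβ, hGβ⟩ : ∃ G : H →L[ℂ] H, G = (((β:ℝ):ℂ)⁻¹ • Q₀ + P) * U := ⟨_, rfl⟩
  have hGK : Gβ * K = ((β:ℝ):ℂ)⁻¹ • (J * K) := by
    have h1' : U * K = Q₀ * (U * K) := by
      rw [← mul_assoc, hQU, mul_assoc, hQK]
    have h2 : (((β:ℝ):ℂ)⁻¹ • Q₀ + P) * Q₀ = ((β:ℝ):ℂ)⁻¹ • Q₀ := by
      rw [add_mul, smul_mul_assoc, hQQ, hPQ, add_zero]
    calc Gβ * K = (((β:ℝ):ℂ)⁻¹ • Q₀ + P) * (U*K) := by rw [hGβ, mul_assoc]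
    _ = (((β:ℝ):ℂ)⁻¹ • Q₀ + P) * (Q₀*(U*K)) := by conv_lhs => rw [h1']
    _ = ((((β:ℝ):ℂ)⁻¹ • Q₀ + P) * Q₀)*(U*K) := by rw [mul_assoc]
    _ = (((β:ℝ):ℂ)⁻¹ • Q₀)*(U*K) := by rw [h2]
    _ = ((β:ℝ):ℂ)⁻¹ • (J * K) := by rw [hJ, smul_mul_assoc, mul_assoc]
  have hGKnorm : ‖Gβ * K‖ ≤ 1/2 := by
    rw [hGK, norm_smul, hnβ]
    rw [inv_mul_le_iff₀ hβ0]
    linarith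
  have hwβlt : ‖-(Gβ*K)‖ < 1 := by rw [norm_neg]; linarith
  obtain ⟨wβ, hwβval⟩ : ∃ w : (H →L[ℂ] H)ˣ, (w : H →L[ℂ] H) = 1 + Gβ*K :=
    ⟨Units.oneSub (-(Gβ*K)) hwβlt, by rw [Units.val_oneSub, sub_neg_eq_add]⟩
  obtain ⟨Wβ, hWβ⟩ : ∃ W : H →L[ℂ] H, W = ((wβ⁻¹ : (H →L[ℂ] H)ˣ) : H →L[ℂ] H) := ⟨_, rfl⟩
  have hWβnorm : ‖Wβ‖ ≤ 2 := by
    rw [hWβ]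
    exact aux_inv_norm_le_two hone wβ (-(Gβ*K))
      (by rw [hwβval, sub_neg_eq_add]) (by rw [norm_neg]; exact hGKnorm)
  have hwβWβ : (wβ : H →L[ℂ] H) * Wβ = 1 := by rw [hWβ]; exact wβ.mul_inv
  have hWβwβ : Wβ * (wβ : H →L[ℂ] H) = 1 := by rw [hWβ]; exact wβ.inv_mul
  obtain ⟨Vβ, hVβ⟩ : ∃ V : H →L[ℂ] H, V = Wβ * Gβ := ⟨_, rfl⟩
  obtain ⟨dβ, hdβ⟩ : ∃ d : H →L[ℂ] H, d = ((β:ℝ):ℂ)⁻¹ • (Wβ * J) := ⟨_, rfl⟩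
  obtain ⟨Tβ, hTβ⟩ : ∃ T : H →L[ℂ] H, T = ((β:ℝ):ℂ) • B + P + K := ⟨_, rfl⟩
  have hBPG : (((β:ℝ):ℂ) • B + P) * Gβ = 1 := by
    have h2 : (((β:ℝ):ℂ) • B + P) * ((((β:ℝ):ℂ)⁻¹ • Q₀) + P) = B + P := by
      have e : (((β:ℝ):ℂ) • B + P) * ((((β:ℝ):ℂ)⁻¹ • Q₀) + P)
          = (((β:ℝ):ℂ) * ((β:ℝ):ℂ)⁻¹) • (B * Q₀) + ((β:ℝ):ℂ) • (B * P)
            + ((β:ℝ):ℂ)⁻¹ • (P * Q₀) + P * P := by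
        simp only [add_mul, mul_add, smul_add, smul_mul_assoc, mul_smul_comm, smul_smul]
        module
      rw [e, hBQ, hBPm, hPQ, hPP, smul_zero, smul_zero, mul_inv_cancel₀ hβc, one_smul,
        add_zero, add_zero]
    rw [hGβ, ← mul_assoc, h2, hUBP]
  have hGBP : Gβ * (((β:ℝ):ℂ) • B + P) = 1 := by
    have h3 : ((β:ℝ):ℂ) • B + P = (B + P) * ((((β:ℝ):ℂ) • Q₀) + P) := by
      have e : (B + P) * ((((β:ℝ):ℂ) • Q₀) + P)
          = ((β:ℝ):ℂ) • (B * Q₀) + B * P + ((β:ℝ):ℂ) • (P * Q₀) + P * P := by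
        simp only [add_mul, mul_add, smul_add, mul_smul_comm]
        module
      rw [e, hBQ, hBPm, hPQ, hPP, smul_zero, add_zero, add_zero]
    have h2 : U * (((β:ℝ):ℂ) • B + P) = ((β:ℝ):ℂ) • Q₀ + P := by
      rw [h3, ← mul_assoc, hUBP', one_mul]
    rw [hGβ, mul_assoc, h2]
    have e : (((β:ℝ):ℂ)⁻¹ • Q₀ + P) * (((β:ℝ):ℂ) • Q₀ + P)
        = (((β:ℝ):ℂ)⁻¹ * ((β:ℝ):ℂ)) • (Q₀ * Q₀) + ((β:ℝ):ℂ)⁻¹ • (Q₀ * P)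
          + ((β:ℝ):ℂ) • (P * Q₀) + P * P := by
      simp only [add_mul, mul_add, smul_add, smul_mul_assoc, mul_smul_comm, smul_smul]
      module
    rw [e, hQQ, hQP, hPQ, hPP, smul_zero, smul_zero, inv_mul_cancel₀ hβc, one_smul,
      add_zero, add_zero, hQ₀]
    abel
  have hTfact : Tβ = (((β:ℝ):ℂ) • B + P) * ((1 : H →L[ℂ] H) + Gβ*K) := by
    rw [hTβ, mul_add, mul_one, ← mul_assoc, hBPG, one_mul]
  have hTV : Tβ * Vβ = 1 := by
    rw [hTfact, hVβ, ← hwβval, mul_assoc, ← mul_assoc ((wβ : H →L[ℂ] H)), hwβWβ,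
      one_mul, hBPG]
  have hVT : Vβ * Tβ = 1 := by
    rw [hTfact, hVβ, mul_assoc, ← mul_assoc Gβ, hGBP, one_mul, ← hwβval, hWβwβ]
  have hQJ : Q₀ * J = J := by rw [hJ, ← mul_assoc, hQQ]
  have hQGK : Q₀ * (Gβ * K) = Gβ * K := by
    rw [hGK, mul_smul_comm, ← mul_assoc, hQJ]
  have hGKQ : (Gβ * K) * Q₀ = Gβ * K := by
    rw [hGK, smul_mul_assoc, mul_assoc, hKQ]
  have hQWβ : Q₀ * Wβ = Wβ * Q₀ := by
    have hc : Commute Q₀ ((wβ : (H →L[ℂ] H)ˣ) : H →L[ℂ] H) := by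
      rw [hwβval]
      show Q₀ * (1 + Gβ*K) = (1 + Gβ*K) * Q₀
      rw [mul_add, add_mul, mul_one, one_mul, hQGK, hGKQ]
    rw [hWβ]
    exact hc.units_inv_right
  have hQGβ : Q₀ * Gβ = ((β:ℝ):ℂ)⁻¹ • J := by
    rw [hGβ, ← mul_assoc, mul_add, mul_smul_comm, hQQ, hQP, add_zero, smul_mul_assoc, hJ]
  have hGβQ : Gβ * Q₀ = ((β:ℝ):ℂ)⁻¹ • J := by
    rw [hGβ, mul_assoc, ← hQU, ← mul_assoc, add_mul, smul_mul_assoc, hQQ, hPQ, add_zero,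
      smul_mul_assoc, hJ]
  have hQV : Q₀ * Vβ = dβ := by
    rw [hVβ, hdβ, ← mul_assoc, hQWβ, mul_assoc, hQGβ, mul_smul_comm]
  have hVQ : Vβ * Q₀ = dβ := by
    rw [hVβ, hdβ, mul_assoc, hGβQ, mul_smul_comm]
  have hPdβ : P * dβ = 0 := by rw [← hQV, ← mul_assoc, hPQ, zero_mul]
  have hQdβ : Q₀ * dβ = dβ := by rw [← hQV, ← mul_assoc, hQQ]
  have hTP : Tβ * P = P := by
    rw [hTβ, add_mul, add_mul, smul_mul_assoc, hBPm, smul_zero, hPP, hKP, zero_add,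
      add_zero]
  have hVP : Vβ * P = P := by
    conv_lhs => rw [← hTP, ← mul_assoc, hVT, one_mul]
  have hTd : Tβ * dβ = Q₀ := by rw [← hVQ, ← mul_assoc, hTV, one_mul]
  have hdnorm : ‖dβ‖ ≤ 2*‖J‖/β := by
    rw [hdβ, norm_smul, hnβ]
    have h1 : ‖Wβ * J‖ ≤ 2 * ‖J‖ :=
      le_trans (norm_mul_le _ _) (mul_le_mul_of_nonneg_right hWβnorm (norm_nonneg _))
    calc β⁻¹ * ‖Wβ * J‖ ≤ β⁻¹ * (2*‖J‖) := by
          exact mul_le_mul_of_nonneg_left h1 (by positivity)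
    _ = 2*‖J‖/β := by rw [div_eq_inv_mul]
  have hd1 : ‖dβ‖ ≤ 1 := by
    refine le_trans hdnorm ?_
    rw [div_le_one hβ0]
    linarith
  -- Schur complement machinery
  obtain ⟨K', hK'⟩ : ∃ K' : H →L[ℂ] H, K' = bb * dβ * cc := ⟨_, rfl⟩
  have hK'norm : ‖K'‖ ≤ ‖bb‖*‖dβ‖*‖cc‖ := by
    rw [hK']
    exact le_trans (norm_mul_le _ _)
      (mul_le_mul_of_nonneg_right (norm_mul_le _ _) (norm_nonneg _))
  have hK'norm2 : ‖K'‖ ≤ ‖bb‖*(2*‖J‖/β)*‖cc‖ := by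
    refine le_trans hK'norm ?_
    exact mul_le_mul_of_nonneg_right
      (mul_le_mul_of_nonneg_left hdnorm (norm_nonneg bb)) (norm_nonneg cc)
  have hXnn : (0:ℝ) ≤ ‖Rz‖*‖bb‖*‖cc‖*‖J‖ := by positivity
  have hRzK'small : ‖Rz * K'‖ ≤ 1/2 := by
    calc ‖Rz * K'‖ ≤ ‖Rz‖ * ‖K'‖ := norm_mul_le _ _
    _ ≤ ‖Rz‖ * (‖bb‖*(2*‖J‖/β)*‖cc‖) :=
        mul_le_mul_of_nonneg_left hK'norm2 (norm_nonneg _)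
    _ = (2*(‖Rz‖*‖bb‖*‖cc‖*‖J‖))/β := by ring
    _ ≤ 1/2 := by
        rw [div_le_iff₀ hβ0]
        linarith
  have hK'Rzsmall : ‖K' * Rz‖ ≤ 1/2 := by
    calc ‖K' * Rz‖ ≤ ‖K'‖ * ‖Rz‖ := norm_mul_le _ _
    _ ≤ (‖bb‖*(2*‖J‖/β)*‖cc‖) * ‖Rz‖ :=
        mul_le_mul_of_nonneg_right hK'norm2 (norm_nonneg _)
    _ = (2*(‖Rz‖*‖bb‖*‖cc‖*‖J‖))/β := by ring
    _ ≤ 1/2 := by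
        rw [div_le_iff₀ hβ0]
        linarith
  obtain ⟨wz, hwzval⟩ : ∃ w : (H →L[ℂ] H)ˣ, (w : H →L[ℂ] H) = 1 - Rz * K' :=
    ⟨Units.oneSub _ (lt_of_le_of_lt hRzK'small (by norm_num)), Units.val_oneSub _ _⟩
  obtain ⟨Wz, hWz⟩ : ∃ W : H →L[ℂ] H, W = ((wz⁻¹ : (H →L[ℂ] H)ˣ) : H →L[ℂ] H) := ⟨_, rfl⟩
  obtain ⟨wz', hwz'val⟩ : ∃ w : (H →L[ℂ] H)ˣ, (w : H →L[ℂ] H) = 1 - K' * Rz :=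
    ⟨Units.oneSub _ (lt_of_le_of_lt hK'Rzsmall (by norm_num)), Units.val_oneSub _ _⟩
  obtain ⟨Wz', hWz'⟩ : ∃ W : H →L[ℂ] H, W = ((wz'⁻¹ : (H →L[ℂ] H)ˣ) : H →L[ℂ] H) := ⟨_, rfl⟩
  have hWz'norm : ‖Wz'‖ ≤ 2 := by
    rw [hWz']
    exact aux_inv_norm_le_two hone wz' _ hwz'val hK'Rzsmall
  have e1wz : Wz * (1 - Rz * K') = 1 := by rw [← hwzval, hWz]; exact wz.inv_mul
  have e2wz : (1 - K' * Rz) * Wz' = 1 := by rw [← hwz'val, hWz']; exact wz'.mul_inv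
  have hswap : Rz * Wz' = Wz * Rz := by
    have h1 : (1 - Rz*K') * Rz = Rz * (1 - K'*Rz) := by
      rw [sub_mul, one_mul, mul_sub, mul_one, mul_assoc]
    calc Rz * Wz' = (Wz * (1 - Rz*K')) * (Rz * Wz') := by rw [e1wz, one_mul]
    _ = Wz * (((1 - Rz*K') * Rz) * Wz') := by simp only [mul_assoc]
    _ = Wz * ((Rz * (1 - K'*Rz)) * Wz') := by rw [h1]
    _ = (Wz * Rz) * ((1 - K'*Rz) * Wz') := by simp only [mul_assoc]
    _ = Wz * Rz := by rw [e2wz, mul_one]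
  obtain ⟨Sβ, hSβ⟩ : ∃ S : H →L[ℂ] H, S = Rz * Wz' := ⟨_, rfl⟩
  have hSnorm : ‖Sβ‖ ≤ ‖Rz‖ * 2 := by
    rw [hSβ]
    exact le_trans (norm_mul_le _ _) (mul_le_mul_of_nonneg_left hWz'norm (norm_nonneg _))
  have hWz'exp : Wz' = 1 + K' * Rz * Wz' := by
    have h := e2wz
    rw [sub_mul, one_mul] at h
    exact eq_add_of_sub_eq h
  have hSsub : Sβ - Rz = Rz * K' * Rz * Wz' := by
    rw [hSβ]
    conv_lhs => rw [hWz'exp]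
    rw [mul_add, mul_one, add_sub_cancel_left]
    simp only [mul_assoc]
  have hPK' : P * K' = K' := by rw [hK', ← mul_assoc, ← mul_assoc, hPbb]
  -- the candidate inverse
  obtain ⟨Rop, hRop⟩ : ∃ R : H →L[ℂ] H,
      R = Sβ * (1 - bb*dβ) + dβ * (1 - cc * (Sβ * (1 - bb*dβ))) := ⟨_, rfl⟩
  have hRopApply : ∀ y : H,
      Rop y = Sβ (y - bb (dβ y)) + dβ (y - cc (Sβ (y - bb (dβ y)))) := by
    intro y; rw [hRop]; rfl
  -- decomposition of the operator family
  have hLdecomp : ∀ (v : H) (hv : v ∈ A.domain),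
      opFam A B β z ⟨v, hv⟩
        = P (A ⟨P v, hPdom v hv⟩) + QA (P v) + AQ v + ((β:ℝ):ℂ) • (B v) - z • v := by
    intro v hv
    have hPv : P v ∈ A.domain := hPdom v hv
    have hQv : v - P v ∈ A.domain := A.domain.sub_mem hv hPv
    have e1 : A ⟨v, hv⟩ = A ⟨P v, hPv⟩ + A ⟨v - P v, hQv⟩ := by
      have e1' : (⟨v, hv⟩ : A.domain) = ⟨P v, hPv⟩ + ⟨v - P v, hQv⟩ := by
        apply Subtype.ext
        show v = P v + (v - P v)
        abel
      rw [e1', A.map_add]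
    have e2 : A ⟨v - P v, hQv⟩ = AQ v := (hAQ ⟨v, hv⟩).symm
    have e3 : A ⟨P v, hPv⟩ = P (A ⟨P v, hPv⟩) + QA (P v) := by
      have h' : QA (P v) = A ⟨P v, hPv⟩ - P (A ⟨P v, hPv⟩) := hQA ⟨P v, hPv⟩
      rw [h']; abel
    calc opFam A B β z ⟨v, hv⟩ = A ⟨v, hv⟩ + ((β:ℝ):ℂ) • (B v) - z • v := rfl
    _ = (A ⟨P v, hPv⟩ + A ⟨v - P v, hQv⟩) + ((β:ℝ):ℂ) • (B v) - z • v := by rw [e1]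
    _ = ((P (A ⟨P v, hPv⟩) + QA (P v)) + AQ v) + ((β:ℝ):ℂ) • (B v) - z • v := by
        conv_lhs => rw [e3, e2]
    _ = P (A ⟨P v, hPv⟩) + QA (P v) + AQ v + ((β:ℝ):ℂ) • (B v) - z • v := by abel
  refine ⟨Rop, ⟨?_, ?_⟩, ?_⟩
  · -- `Rop` is a right inverse
    intro x
    obtain ⟨w, hw⟩ : ∃ w : H, w = x - bb (dβ x) := ⟨_, rfl⟩
    obtain ⟨u, hu⟩ : ∃ u : H, u = Wz' w := ⟨_, rfl⟩
    obtain ⟨r, hrr⟩ : ∃ r : H, r = Rz u := ⟨_, rfl⟩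
    obtain ⟨v, hv⟩ : ∃ v : H, v = x - cc r := ⟨_, rfl⟩
    obtain ⟨dv, hdv⟩ : ∃ d : H, d = dβ v := ⟨_, rfl⟩
    have hSw : Sβ w = r := by rw [hSβ, happly, ← hu, ← hrr]
    have hRxsum : Rop x = r + dv := by
      rw [hRopApply, ← hw, hSw, ← hv, ← hdv]
    -- memberships
    obtain ⟨hm0, hval0⟩ := hQdom (Vβ v)
    have hdvties : dv = Vβ v - P (Vβ v) := by
      rw [hdv, ← hQV, happly, hQ₀app]
    have hdvmem : dv ∈ A.domain := by rw [hdvties]; exact hm0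
    have hAQdv : AQ dv = AQ (Vβ v) := by
      rw [hdvties, ← hQ₀app, ← happly, hAQQ]
    have hAdv : A ⟨dv, hdvmem⟩ = AQ dv := by
      have h1 : A ⟨dv, hdvmem⟩ = A ⟨Vβ v - P (Vβ v), hm0⟩ := hApp _ _ hdvties
      rw [h1, hval0, ← hAQdv]
    have hrmem : r ∈ A.domain := by rw [hrr]; exact hRzdom u
    have hmem : Rop x ∈ A.domain := by
      rw [hRxsum]; exact A.domain.add_mem hrmem hdvmem
    refine ⟨hmem, ?_⟩
    -- pointwise facts
    have hPr : P r = r := by rw [hrr]; exact (hRzP u).1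
    have hPdv : P dv = 0 := by rw [hdv, ← happly, hPdβ, hzeroapply]
    have hQ₀dv : Q₀ dv = dv := by rw [hdv, ← happly, hQdβ]
    have hPRx : P (Rop x) = r := by
      rw [hRxsum, map_add, hPr, hPdv, add_zero]
    have t1a : A ⟨P (Rop x), hPdom (Rop x) hmem⟩ = A ⟨P (Rz u), hPdom _ (hRzdom u)⟩ := by
      refine hApp _ _ ?_
      rw [hPRx, (hRzP u).1, hrr]
    have t1 : P (A ⟨P (Rop x), hPdom (Rop x) hmem⟩) = z • r + P u := by
      rw [t1a, hrr, ← hRz₁ u]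
      abel
    have t2 : QA (P (Rop x)) = QA r := by rw [hPRx]
    have hAQr : AQ r = 0 := by rw [← hPr, ← happly, hAQP, hzeroapply]
    have t3 : AQ (Rop x) = AQ dv := by
      rw [hRxsum, map_add, hAQr, zero_add]
    have hBr : B r = 0 := by rw [← hPr, ← happly, hBPm, hzeroapply]
    have t4 : B (Rop x) = B dv := by
      rw [hRxsum, map_add, hBr, zero_add]
    -- the bracket identity
    have g1 : Tβ dv = Q₀ v := by rw [hdv, ← happly, hTd]
    have g2 : Tβ dv = ((β:ℝ):ℂ) • (B dv) + P dv + (Q₀ (AQ dv) - z • Q₀ dv) := by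
      rw [hTβ, hK]; rfl
    have g5 : Q₀ (AQ dv) = AQ dv - bb dv := by
      rw [hQ₀app, hbb, happly]
    have t6 : AQ dv + ((β:ℝ):ℂ) • (B dv) - z • dv = bb dv + Q₀ v := by
      rw [← g1, g2, hPdv, hQ₀dv, g5]
      module
    -- remaining vector facts
    have f1 : QA r = cc r := by rw [hcc, happly, hPr]
    have hQ₀cc : Q₀ (cc r) = cc r := by rw [← happly, hQcc]
    have f2 : Q₀ v = Q₀ x - cc r := by
      rw [hv, map_sub, hQ₀cc]
    have f3 : bb dv = bb (dβ x) - bb (dβ (cc r)) := by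
      rw [hdv, hv, map_sub, map_sub]
    have huw : u - K' r = w := by
      have h := congrArg (fun (F : H →L[ℂ] H) => F w) e2wz
      simp only [honeapply] at h
      calc u - K' r = ((1 - K' * Rz) * Wz') w := by
            rw [happly, hsubapply, honeapply, happly, ← hu, ← hrr]
      _ = w := h
    have hPK'r : P (K' r) = K' r := by rw [← happly, hPK']
    have hK'rval : K' r = bb (dβ (cc r)) := by rw [hK', happly, happly]
    have f4 : P u = P w + bb (dβ (cc r)) := by
      have : P u = P (w + K' r) := by rw [← huw]; congr 1; abel
      rw [this, map_add, hPK'r, hK'rval]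
    have hPbbx : P (bb (dβ x)) = bb (dβ x) := by rw [← happly, hPbb]
    have f5 : P w = P x - bb (dβ x) := by
      rw [hw, map_sub, hPbbx]
    -- assemble
    refine (hLdecomp (Rop x) hmem).trans ?_
    calc P (A ⟨P (Rop x), hPdom (Rop x) hmem⟩) + QA (P (Rop x)) + AQ (Rop x)
          + ((β:ℝ):ℂ) • (B (Rop x)) - z • (Rop x)
        = (z • r + P u) + QA r + AQ dv + ((β:ℝ):ℂ) • (B dv) - z • (r + dv) := by
          rw [t1, t2, t3, t4, hRxsum]
    _ = P u + QA r + (AQ dv + ((β:ℝ):ℂ) • (B dv) - z • dv) := by module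
    _ = P u + QA r + (bb dv + Q₀ v) := by rw [t6]
    _ = (P w + bb (dβ (cc r))) + cc r
          + ((bb (dβ x) - bb (dβ (cc r))) + (Q₀ x - cc r)) := by
          rw [f4, f1, f3, f2]
    _ = P w + bb (dβ x) + Q₀ x := by module
    _ = (P x - bb (dβ x)) + bb (dβ x) + (x - P x) := by rw [f5, hQ₀app]
    _ = x := by module
  · -- `Rop` is a left inverse
    rintro ⟨ψv, hψm⟩
    have hψm' : ψv ∈ A.domain := hψm
    obtain ⟨p, hp⟩ : ∃ p : H, p = P ψv := ⟨_, rfl⟩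
    obtain ⟨q, hq⟩ : ∃ q : H, q = ψv - p := ⟨_, rfl⟩
    obtain ⟨Ap, hAp⟩ : ∃ a : H, a = A ⟨P ψv, hPdom ψv hψm'⟩ := ⟨_, rfl⟩
    obtain ⟨x, hx⟩ : ∃ x : H,
        x = P Ap + QA p + AQ ψv + ((β:ℝ):ℂ) • (B ψv) - z • ψv := ⟨_, rfl⟩
    have hx' : x = P (A ⟨P ψv, hPdom ψv hψm'⟩) + QA (P ψv) + AQ ψv
        + ((β:ℝ):ℂ) • (B ψv) - z • ψv := by rw [hx, hAp, hp]
    have hTx : opFam A B β z ⟨ψv, hψm⟩ = x := (hLdecomp ψv hψm').trans hx'.symm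
    have hψpq : ψv = p + q := by rw [hq]; abel
    have hPp : P p = p := by rw [hp]; exact hPid ψv
    have hPQAp : P (QA p) = 0 := by rw [← happly, hPQA, hzeroapply]
    have hPAQψ : P (AQ ψv) = bb ψv := by rw [hbb, happly]
    have hPBψ : P (B ψv) = 0 := by rw [← happly, hPBm, hzeroapply]
    have hPAp : P (P Ap) = P Ap := hPid Ap
    have hPx : P x = P Ap - z • p + bb ψv := by
      rw [hx, map_sub, map_add, map_add, map_add, map_smul, map_smul, hPAp, hPQAp,
        hPAQψ, hPBψ, ← hp]
      module
    have hTψ : Tβ ψv = ((β:ℝ):ℂ) • (B ψv) + p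
        + ((AQ ψv - P (AQ ψv)) - z • (ψv - p)) := by
      have h0 : Tβ ψv = ((β:ℝ):ℂ) • (B ψv) + P ψv + (Q₀ (AQ ψv) - z • Q₀ ψv) := by
        rw [hTβ, hK]; rfl
      rw [h0, hQ₀app, hQ₀app, ← hp]
    have hQ₀x : Q₀ x = QA p + Tβ ψv - p := by
      rw [hQ₀app, hPx, hx, hTψ, hPAQψ]
      module
    have hVTψ : Vβ (Tβ ψv) = ψv := by rw [← happly, hVT, honeapply]
    have hVp : Vβ p = p := by rw [hp, ← happly, hVP]
    have hVQAp : Vβ (QA p) = dβ (QA p) := by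
      have h1 : Q₀ (QA p) = QA p := by rw [← happly, hQQA]
      conv_lhs => rw [← h1]
      rw [← happly, hVQ]
    have hdx : dβ x = q + dβ (QA p) := by
      have h1 : dβ x = Vβ (Q₀ x) := by rw [← hVQ]; exact happly _ _ _
      rw [h1, hQ₀x, map_sub, map_add, hVQAp, hVTψ, hVp, hq]
      abel
    have hbp : bb p = 0 := by rw [hp, ← happly, hbbP, hzeroapply]
    have hbψq : bb ψv = bb q := by
      conv_lhs => rw [hψpq]
      rw [map_add, hbp, zero_add]
    have hccp : cc p = QA p := by rw [hcc, happly, hPp]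
    have hK'p : K' p = bb (dβ (QA p)) := by rw [hK', happly, happly, hccp]
    have hRzPAp : Rz (P Ap - z • p) = p := by
      rw [hAp, hp]
      exact hRz₂ ⟨ψv, hψm'⟩
    have hRzx : Rz x = p + Rz (bb ψv) := by
      have ha := (hRzP x).2
      rw [← ha, hPx, map_add, hRzPAp]
    obtain ⟨wx, hwx⟩ : ∃ w : H, w = x - bb (dβ x) := ⟨_, rfl⟩
    have hRzwx : Rz wx = p - Rz (K' p) := by
      rw [hwx, map_sub, hRzx, hdx, map_add, map_add, hbψq, hK'p]
      abel
    have hSwx : Sβ wx = p := by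
      have hkey : Sβ wx = Wz (Rz wx) := by rw [hSβ, hswap, happly]
      have h2 : (1 - Rz * K') p = p - Rz (K' p) := by
        rw [hsubapply, honeapply, happly]
      rw [hkey, hRzwx, ← h2, ← happly, e1wz, honeapply]
    obtain ⟨vx, hvx⟩ : ∃ v : H, v = x - cc (Sβ wx) := ⟨_, rfl⟩
    have hdvx : dβ vx = q := by
      rw [hvx, hSwx, map_sub, hccp, hdx]
      abel
    show Rop (opFam A B β z ⟨ψv, hψm⟩) = ψv
    rw [hTx, hRopApply, ← hwx, ← hvx, hSwx, hdvx, ← hψpq]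
  · -- the norm estimate
    have hPRzP : P ∘L Rz ∘L P = Rz := by
      have h1 : P ∘L Rz ∘L P = P * (Rz * P) := rfl
      rw [h1, hRzPm, hPRz]
    rw [hPRzP]
    have hdec : Rop - Rz = (Sβ - Rz) - Sβ*(bb*dβ)
        + dβ * (1 - cc * (Sβ * (1 - bb*dβ))) := by
      rw [hRop]
      noncomm_ring
    have hSsub2 : ‖Sβ - Rz‖ ≤ 2*‖Rz‖*‖Rz‖*‖bb‖*‖cc‖*‖dβ‖ := by
      calc ‖Sβ - Rz‖ = ‖Rz*K'*Rz*Wz'‖ := by rw [hSsub]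
      _ ≤ ‖Rz‖*‖K'‖*‖Rz‖*‖Wz'‖ := aux_norm_mul4 _ _ _ _
      _ ≤ ‖Rz‖*(‖bb‖*‖dβ‖*‖cc‖)*‖Rz‖*2 := by
          gcongr <;> first | exact hK'norm | exact hWz'norm
      _ = 2*‖Rz‖*‖Rz‖*‖bb‖*‖cc‖*‖dβ‖ := by ring
    have he2 : ‖Sβ*(bb*dβ)‖ ≤ 2*‖Rz‖*‖bb‖*‖dβ‖ := by
      calc ‖Sβ*(bb*dβ)‖ ≤ ‖Sβ‖*‖bb*dβ‖ := norm_mul_le _ _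
      _ ≤ (‖Rz‖*2)*(‖bb‖*‖dβ‖) := by
          refine mul_le_mul hSnorm (norm_mul_le _ _) (norm_nonneg _) ?_
          positivity
      _ = 2*‖Rz‖*‖bb‖*‖dβ‖ := by ring
    have he3 : ‖dβ * (1 - cc * (Sβ * (1 - bb*dβ)))‖
        ≤ ‖dβ‖ * (1 + 2*‖Rz‖*‖cc‖*(1+‖bb‖)) := by
      have h1 : ‖(1:H →L[ℂ] H) - bb*dβ‖ ≤ 1 + ‖bb‖ := by
        calc ‖(1:H →L[ℂ] H) - bb*dβ‖ ≤ ‖(1:H →L[ℂ] H)‖ + ‖bb*dβ‖ := norm_sub_le _ _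
        _ ≤ 1 + ‖bb‖*‖dβ‖ := add_le_add hone (norm_mul_le _ _)
        _ ≤ 1 + ‖bb‖ := by
            have := mul_le_mul_of_nonneg_left hd1 (norm_nonneg bb)
            linarith
      have h2 : ‖cc * (Sβ * (1 - bb*dβ))‖ ≤ 2*‖Rz‖*‖cc‖*(1+‖bb‖) := by
        calc ‖cc * (Sβ * (1 - bb*dβ))‖ ≤ ‖cc‖*(‖Sβ‖*‖(1:H →L[ℂ] H) - bb*dβ‖) :=
            le_trans (norm_mul_le _ _)
              (mul_le_mul_of_nonneg_left (norm_mul_le _ _) (norm_nonneg _))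
        _ ≤ ‖cc‖*((‖Rz‖*2)*(1+‖bb‖)) := by
            refine mul_le_mul_of_nonneg_left ?_ (norm_nonneg _)
            refine mul_le_mul hSnorm h1 (norm_nonneg _) ?_
            positivity
        _ = 2*‖Rz‖*‖cc‖*(1+‖bb‖) := by ring
      calc ‖dβ * (1 - cc * (Sβ * (1 - bb*dβ)))‖
          ≤ ‖dβ‖ * ‖(1:H →L[ℂ] H) - cc * (Sβ * (1 - bb*dβ))‖ := norm_mul_le _ _
      _ ≤ ‖dβ‖ * (1 + 2*‖Rz‖*‖cc‖*(1+‖bb‖)) := by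
          refine mul_le_mul_of_nonneg_left ?_ (norm_nonneg _)
          calc ‖(1:H →L[ℂ] H) - cc * (Sβ * (1 - bb*dβ))‖
              ≤ ‖(1:H →L[ℂ] H)‖ + ‖cc * (Sβ * (1 - bb*dβ))‖ := norm_sub_le _ _
          _ ≤ 1 + 2*‖Rz‖*‖cc‖*(1+‖bb‖) := add_le_add hone h2
    have hC₀ : (0:ℝ) ≤ 2*‖Rz‖*‖Rz‖*‖bb‖*‖cc‖ + 2*‖Rz‖*‖bb‖ + (1 + 2*‖Rz‖*‖cc‖*(1+‖bb‖)) := by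
      positivity
    calc ‖Rop - Rz‖
        ≤ ‖Sβ - Rz‖ + ‖Sβ*(bb*dβ)‖ + ‖dβ * (1 - cc * (Sβ * (1 - bb*dβ)))‖ := by
          rw [hdec]
          refine le_trans (norm_add_le _ _) ?_
          gcongr
          exact norm_sub_le _ _
    _ ≤ 2*‖Rz‖*‖Rz‖*‖bb‖*‖cc‖*‖dβ‖ + 2*‖Rz‖*‖bb‖*‖dβ‖
          + ‖dβ‖ * (1 + 2*‖Rz‖*‖cc‖*(1+‖bb‖)) :=
        add_le_add (add_le_add hSsub2 he2) he3
    _ = ‖dβ‖ * (2*‖Rz‖*‖Rz‖*‖bb‖*‖cc‖ + 2*‖Rz‖*‖bb‖ + (1 + 2*‖Rz‖*‖cc‖*(1+‖bb‖))) := by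
        ring
    _ ≤ (2*‖J‖/β) * (2*‖Rz‖*‖Rz‖*‖bb‖*‖cc‖ + 2*‖Rz‖*‖bb‖ + (1 + 2*‖Rz‖*‖cc‖*(1+‖bb‖))) :=
        mul_le_mul_of_nonneg_right hdnorm hC₀
    _ = 2*‖J‖*(2*‖Rz‖*‖Rz‖*‖bb‖*‖cc‖ + 2*‖Rz‖*‖bb‖ + (1 + 2*‖Rz‖*‖cc‖*(1+‖bb‖))) / β := by
        ring
end
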